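/- Assume C_max = max_i C_i and C_min = min_i C_i with C_i ∈ [0,1]. If y is a median of x_1,...,x_n and y* minimizes SC(z) = Σ_i (w_i|z - x_i| + C_i) with w_i = 1 - C_i, then SC(y)/SC(y*) ≤ (1 + C_max)/(1 + C_min) whenever SC(y*) > 0. -/

import Mathlib

/-!
Assume `y ≤ y*` (otherwise reflect the line) and put `t = y* - y ≤ 1`. Moving from `y*` to `y`
lowers the cost of every agent at or left of `y` by `w_i t ≥ (1 - C_max) t` and raises the cost of
an agent right of `y` by at most `w_i t ≤ (1 - C_min) t`. As the median has at least as many agents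
on its left as on its right, `SC(y) ≤ SC(y*) + (C_max - C_min) t r`, where `r` counts the agents
right of `y`. Each agent at or left of `y` costs at least `t + C_min (1 - t)` at `y*` and every
agent costs at least `C_min`, so pairing each right agent with a left one gives
`SC(y*) ≥ r t (1 + C_min)` (this uses `t ≤ 1`). Combining the two bounds gives the ratio.
-/

open Finset

namespace FacilityLocation

def agentCost (c a z : ℝ) : ℝ := (1 - c) * |z - a| + c

def socialCost {ι : Type*} [Fintype ι] (x C : ι → ℝ) (z : ℝ) : ℝ :=
  ∑ i, agentCost (C i) (x i) z

section Agent

variable {c a y z : ℝ}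

theorem le_agentCost (hc : c ≤ 1) : c ≤ agentCost c a z := by
  unfold agentCost
  nlinarith [abs_nonneg (z - a)]

theorem agentCost_le_add (hc : c ≤ 1) (hyz : y ≤ z) :
    agentCost c a y ≤ agentCost c a z + (1 - c) * (z - y) := by
  unfold agentCost
  have h := abs_sub_le y z a
  rw [abs_sub_comm y z, abs_of_nonneg (sub_nonneg.2 hyz)] at h
  nlinarith

theorem agentCost_eq_add_of_le (ha : a ≤ y) (hyz : y ≤ z) :
    agentCost c a z = agentCost c a y + (1 - c) * (z - y) := by
  unfold agentCost
  rw [abs_of_nonneg (by linarith : 0 ≤ z - a), abs_of_nonneg (by linarith : 0 ≤ y - a)]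
  ring

end Agent

section Social

variable {ι : Type*} [Fintype ι] {x C : ι → ℝ} {Cmin Cmax y z : ℝ}

theorem socialCost_eq_sum_add_sum (y z : ℝ) :
    socialCost x C z = ∑ i with y < x i, agentCost (C i) (x i) z +
      ∑ i with ¬ y < x i, agentCost (C i) (x i) z :=
  (sum_filter_add_sum_filter_not _ _ _).symm

theorem socialCost_add_card_le (hC : ∀ i, C i ∈ Set.Icc Cmin Cmax) (hCmax : Cmax ≤ 1)
    (hyz : y ≤ z) :
    socialCost x C y + #{i | ¬ y < x i} * ((1 - Cmax) * (z - y)) ≤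
      socialCost x C z + #{i | y < x i} * ((1 - Cmin) * (z - y)) := by
  have hright : ∑ i with y < x i, agentCost (C i) (x i) y ≤
      ∑ i with y < x i, (agentCost (C i) (x i) z + (1 - Cmin) * (z - y)) := by
    refine sum_le_sum fun i _ => (agentCost_le_add ((hC i).2.trans hCmax) hyz).trans ?_
    gcongr
    exact (hC i).1
  have hleft : ∑ i with ¬ y < x i, (agentCost (C i) (x i) y + (1 - Cmax) * (z - y)) ≤
      ∑ i with ¬ y < x i, agentCost (C i) (x i) z := by
    refine sum_le_sum fun i hi => ?_
    rw [agentCost_eq_add_of_le (not_lt.1 (mem_filter.1 hi).2) hyz]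
    gcongr
    exact (hC i).2
  simp only [sum_add_distrib, sum_const, nsmul_eq_mul] at hright hleft
  rw [socialCost_eq_sum_add_sum y y, socialCost_eq_sum_add_sum y z]
  linarith

theorem card_mul_le_socialCost (hC : ∀ i, C i ∈ Set.Icc Cmin Cmax) (hCmin : 0 ≤ Cmin)
    (hCmax : Cmax ≤ 1) (hyz : y ≤ z) (hzy : z ≤ y + 1)
    (hmed : #{i | y < x i} ≤ #{i | ¬ y < x i}) :
    #{i | y < x i} * ((1 + Cmin) * (z - y)) ≤ socialCost x C z := by
  have hright : ∑ i with y < x i, Cmin ≤ ∑ i with y < x i, agentCost (C i) (x i) z :=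
    sum_le_sum fun i _ => (hC i).1.trans (le_agentCost ((hC i).2.trans hCmax))
  have hleft : ∑ i with ¬ y < x i, (z - y + Cmin * (1 - (z - y))) ≤
      ∑ i with ¬ y < x i, agentCost (C i) (x i) z := by
    refine sum_le_sum fun i hi => ?_
    rw [agentCost_eq_add_of_le (not_lt.1 (mem_filter.1 hi).2) hyz]
    have := le_agentCost (a := x i) (z := y) ((hC i).2.trans hCmax)
    nlinarith [(hC i).1]
  simp only [sum_const, nsmul_eq_mul] at hright hleft
  rw [socialCost_eq_sum_add_sum y z]
  have hmed_real : (#{i | y < x i} : ℝ) ≤ #{i | ¬ y < x i} := by exact_mod_cast hmed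
  nlinarith [mul_le_mul_of_nonneg_right hmed_real
      (by nlinarith : 0 ≤ z - y + Cmin * (1 - (z - y))),
    mul_nonneg (Nat.cast_nonneg (α := ℝ) #{i | y < x i})
      (mul_nonneg hCmin (by linarith : 0 ≤ 2 - 2 * (z - y)))]

theorem one_add_mul_socialCost_le_of_le (hC : ∀ i, C i ∈ Set.Icc Cmin Cmax) (hCmin : 0 ≤ Cmin)
    (hCC : Cmin ≤ Cmax) (hCmax : Cmax ≤ 1) (hyz : y ≤ z) (hzy : z ≤ y + 1)
    (hmed : 2 * #{i | y < x i} ≤ Fintype.card ι) :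
    (1 + Cmin) * socialCost x C y ≤ (1 + Cmax) * socialCost x C z := by
  have hcard : #{i | y < x i} + #{i | ¬ y < x i} = Fintype.card ι :=
    card_filter_add_card_filter_not _
  have hright_le_left : #{i | y < x i} ≤ #{i | ¬ y < x i} := by omega
  have hmoved := socialCost_add_card_le (x := x) hC hCmax hyz
  have hlower := card_mul_le_socialCost hC hCmin hCmax hyz hzy hright_le_left
  have hright_le_left' : (#{i | y < x i} : ℝ) ≤ #{i | ¬ y < x i} := by
    exact_mod_cast hright_le_left
  nlinarith [mul_le_mul_of_nonneg_left hmoved (by linarith : (0 : ℝ) ≤ 1 + Cmin),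
    mul_le_mul_of_nonneg_right hright_le_left' (by nlinarith : 0 ≤ (1 - Cmax) * (z - y)),
    mul_le_mul_of_nonneg_left hlower (sub_nonneg.2 hCC)]

theorem socialCost_neg (x C : ι → ℝ) (z : ℝ) : socialCost (-x) C (-z) = socialCost x C z := by
  simp only [socialCost, agentCost, Pi.neg_apply, neg_sub_neg, abs_sub_comm]

theorem one_add_mul_socialCost_le (hC : ∀ i, C i ∈ Set.Icc Cmin Cmax) (hCmin : 0 ≤ Cmin)
    (hCC : Cmin ≤ Cmax) (hCmax : Cmax ≤ 1) (hdist : |y - z| ≤ 1)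
    (hmed_left : 2 * #{i | x i < y} ≤ Fintype.card ι)
    (hmed_right : 2 * #{i | y < x i} ≤ Fintype.card ι) :
    (1 + Cmin) * socialCost x C y ≤ (1 + Cmax) * socialCost x C z := by
  obtain ⟨hzy, hyz⟩ := abs_sub_le_iff.1 hdist
  rcases le_total y z with h | h
  · exact one_add_mul_socialCost_le_of_le hC hCmin hCC hCmax h (by linarith) hmed_right
  · simpa only [socialCost_neg] using one_add_mul_socialCost_le_of_le (x := -x) hC hCmin hCC
      hCmax (neg_le_neg h) (by linarith) (by simpa using hmed_left)

end Social

end FacilityLocation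

open FacilityLocation

theorem median_ratio_bound (n : ℕ) (x C : Fin n → ℝ)
    (hne : (Finset.univ : Finset (Fin n)).Nonempty)
    (hC : ∀ i, C i ∈ Set.Icc (0:ℝ) 1)
    (w : Fin n → ℝ) (hw : ∀ i, w i = 1 - C i)
    (SC : ℝ → ℝ) (hSC : ∀ z, SC z = ∑ i, (w i * |z - x i| + C i))
    (Cmax Cmin : ℝ)
    (hCmax : Cmax = Finset.univ.sup' hne C)
    (hCmin : Cmin = Finset.univ.inf' hne C)
    (y : ℝ) (hy : y ∈ Set.Icc (0:ℝ) 1)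
    (hmed1 : 2 * (Finset.univ.filter (fun i => x i < y)).card ≤ n)
    (hmed2 : 2 * (Finset.univ.filter (fun i => y < x i)).card ≤ n)
    (ystar : ℝ) (hystar : ystar ∈ Set.Icc (0:ℝ) 1)
    (hpos : 0 < SC ystar) :
    SC y / SC ystar ≤ (1 + Cmax) / (1 + Cmin) := by
  have hSC_eq : SC = socialCost x C := funext fun z => by simp only [hSC, hw, socialCost, agentCost]
  have hC_bounds : ∀ i, C i ∈ Set.Icc Cmin Cmax := fun i =>
    ⟨hCmin ▸ inf'_le C (mem_univ i), hCmax ▸ le_sup' C (mem_univ i)⟩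
  obtain ⟨j, -, hj_min⟩ := exists_mem_eq_inf' hne C
  obtain ⟨k, -, hk_max⟩ := exists_mem_eq_sup' hne C
  have hCmin0 : 0 ≤ Cmin := hCmin ▸ hj_min ▸ (hC j).1
  have hCmax1 : Cmax ≤ 1 := hCmax ▸ hk_max ▸ (hC k).2
  rw [div_le_div_iff₀ hpos (by linarith), mul_comm, hSC_eq]
  exact one_add_mul_socialCost_le hC_bounds hCmin0 ((hC_bounds j).1.trans (hC_bounds j).2) hCmax1
    (abs_sub_le_iff.2 ⟨by linarith [hy.2, hystar.1], by linarith [hy.1, hystar.2]⟩)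
    (by simpa using hmed1) (by simpa using hmed2)
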